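/- Regge form of the on-shell action: suppose for each wedge (e,f) of a face f with n wedges the SU(2)×SU(2) wedge holonomy satisfies G^±_{ef} = exp(½ i(θ_{ef} ± θ̃_{ef}) X̂^±) for fixed unit su(2) elements X̂^± and real angles with ∑_{e⊂f} θ_{ef} = εΘ_f, ∑_{e⊂f} θ̃_{ef} = π∑_{e⊂f} n_e (n_e ∈ ℤ). Then for positive integers γ⁺ and nonzero integers γ⁻ and spin j_f, the sum S_f = 2|γ⁺|j_f ∑_e ln tr[½(1 + sgn(γ⁺)X̂⁺)G⁺_{ef}] + 2|γ⁻|j_f ∑_e ln tr[½(1 + sgn(γ⁻)X̂⁻)G⁻_{ef}] equals iε(γ⁺+γ⁻)j_fΘ_f + iπ(γ⁺−γ⁻)j_f ∑_{e⊂f} n_e; in particular exp(S_f) = exp(iε(γ⁺+γ⁻)j_fΘ_f)·∏_e ε_e^{(γ⁺−γ⁻)j_f} with ε_e = (−1)^{n_e}. -/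

import Mathlib

open Matrix Complex Finset

noncomputable def σ : Fin 3 → Matrix (Fin 2) (Fin 2) ℂ
  | 0 => !![0, 1; 1, 0]
  | 1 => !![0, -Complex.I; Complex.I, 0]
  | 2 => !![1, 0; 0, -1]

noncomputable def su2vec (v : Fin 3 → ℝ) : Matrix (Fin 2) (Fin 2) ℂ :=
  ∑ i, (v i : ℂ) • σ i

noncomputable def levi {n m : ℕ} (x : Fin n → Fin m) : ℝ :=
  ∏ p ∈ Finset.univ.filter (fun p : Fin n × Fin n => p.1 < p.2),
    ((((x p.2 : ℕ) : ℤ) - ((x p.1 : ℕ) : ℤ)).sign : ℝ)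

noncomputable def eps3 (i j k : Fin 3) : ℝ := levi ![i, j, k]
noncomputable def eps4 (i j k l : Fin 4) : ℝ := levi ![i, j, k, l]
noncomputable def eps5 (i j k l m : Fin 5) : ℝ := levi ![i, j, k, l, m]

noncomputable def det4 (a b c d : Fin 4 → ℝ) : ℝ := Matrix.det (Matrix.of fun I r => ![a, b, c, d] r I)

noncomputable def tstar (a b c : Fin 4 → ℝ) (I : Fin 4) : ℝ :=
  ∑ J, ∑ K, ∑ L, eps4 I J K L * a J * b K * c L

noncomputable def hodge (X : Matrix (Fin 4) (Fin 4) ℝ) : Matrix (Fin 4) (Fin 4) ℝ :=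
  Matrix.of fun I J => (1 / 2) * ∑ K, ∑ L, eps4 I J K L * X K L

noncomputable def sdPart (X : Matrix (Fin 4) (Fin 4) ℝ) (i : Fin 3) : ℝ :=
  (1 / 2) * (∑ j, ∑ k, eps3 i j k * X j.succ k.succ) + X 0 i.succ

noncomputable def asdPart (X : Matrix (Fin 4) (Fin 4) ℝ) (i : Fin 3) : ℝ :=
  (1 / 2) * (∑ j, ∑ k, eps3 i j k * X j.succ k.succ) - X 0 i.succ

noncomputable def wedgeV (a b : Fin 4 → ℝ) : Matrix (Fin 4) (Fin 4) ℝ :=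
  Matrix.of fun I J => a I * b J - a J * b I

/-! For a unit vector `x`, the matrix `X = x ⋅ σ` is traceless with `X² = 1`, so
`tr[½(1 + sX)(cos(φ/2) + i sin(φ/2) X)] = cos(φ/2) + i s sin(φ/2) = exp(i s φ/2)` for `s = ±1`.
Since `2|γ| j` is a natural number, `exp(2|γ| j ∑ log exp(wₑ)) = exp(2|γ| j ∑ wₑ)` whatever branch
of the logarithm is taken, and `|γ| sgn γ = γ` turns the exponent of each chiral half into
`i γ j ∑ₑ φₑ`. Summing the wedge angles with `∑ θₑ = εΘ` and `∑ θ̃ₑ = π ∑ nₑ` gives the Regge form.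
-/

theorem trace_su2vec (x : Fin 3 → ℝ) : trace (su2vec x) = 0 := by
  simp [su2vec, σ, Matrix.trace_fin_two, Fin.sum_univ_three]

theorem su2vec_mul_self (x : Fin 3 → ℝ) :
    su2vec x * su2vec x = ((∑ i, x i ^ 2 : ℝ) : ℂ) • 1 := by
  ext a b
  fin_cases a <;> fin_cases b <;>
    simp [su2vec, σ, Fin.sum_univ_three, Matrix.mul_apply, Fin.sum_univ_two] <;> ring_nf <;>
    simp [Complex.I_sq]

theorem trace_half_one_add_smul_mul {X : Matrix (Fin 2) (Fin 2) ℂ} (htr : trace X = 0)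
    (hsq : X * X = 1) (s c t : ℂ) :
    trace ((1 / 2 : ℂ) • (1 + s • X) * (c • 1 + t • X)) = c + s * t := by
  have hexp : (1 + s • X) * (c • 1 + t • X) = (c + s * t) • 1 + (t + s * c) • X := by
    simp only [add_mul, mul_add, one_mul, mul_one, hsq, mul_smul_comm, smul_mul_assoc]
    module
  rw [smul_mul_assoc, hexp, trace_smul, trace_add, trace_smul, trace_smul, htr, trace_one]
  simp only [Fintype.card_fin, Nat.cast_ofNat, smul_eq_mul, mul_zero, add_zero]
  ring

theorem trace_half_one_add_sign_smul_mul_exp {x : Fin 3 → ℝ} (hx : ∑ i, x i ^ 2 = 1) {γ : ℤ}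
    (hγ : γ ≠ 0) (φ : ℝ) :
    trace (((1 : ℝ) / 2 : ℂ) • (1 + ((γ.sign : ℝ) : ℂ) • su2vec x) *
      ((Real.cos (φ / 2) : ℂ) • 1 + (I * (Real.sin (φ / 2) : ℂ)) • su2vec x)) =
      exp (γ.sign * (φ / 2) * I) := by
  have hsq : su2vec x * su2vec x = 1 := by rw [su2vec_mul_self, hx]; simp
  rw [ofReal_one, trace_half_one_add_smul_mul (trace_su2vec x) hsq, exp_mul_I]
  obtain h | h : γ.sign = 1 ∨ γ.sign = -1 := by
    rcases Int.sign_trichotomy γ with h | h | h <;> simp_all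
  all_goals
    simp [h, mul_comm I]

theorem exp_natCast_mul_sum_log_exp {ι : Type*} (s : Finset ι) (k : ℕ) (w : ι → ℂ) :
    exp (k * ∑ i ∈ s, log (exp (w i))) = exp (k * ∑ i ∈ s, w i) := by
  simp only [exp_nat_mul, exp_sum, exp_log (exp_ne_zero _)]

theorem exp_mul_sum_log_trace {n : ℕ} {x : Fin 3 → ℝ} (hx : ∑ i, x i ^ 2 = 1) (γ : ℤ) (m : ℕ)
    (φ : Fin n → ℝ) :
    exp (((2 * |(γ : ℝ)| * ((m : ℝ) / 2) : ℝ) : ℂ) *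
      ∑ e, log (trace (((1 : ℝ) / 2 : ℂ) • (1 + ((γ.sign : ℝ) : ℂ) • su2vec x) *
        ((Real.cos (φ e / 2) : ℂ) • 1 + (I * (Real.sin (φ e / 2) : ℂ)) • su2vec x)))) =
      exp (I * γ * ((m : ℝ) / 2 : ℝ) * ∑ e, (φ e : ℂ)) := by
  rcases eq_or_ne γ 0 with rfl | hγ
  · simp
  have hcoeff : 2 * |(γ : ℝ)| * ((m : ℝ) / 2) = ((γ.natAbs * m : ℕ) : ℝ) := by
    push_cast [Nat.cast_natAbs, Int.cast_abs]
    ring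
  have hsign : (γ.sign : ℂ) * (γ.natAbs : ℂ) = γ := by
    rw [← Int.cast_natCast, ← Int.cast_mul, Int.sign_mul_natAbs]
  simp only [trace_half_one_add_sign_smul_mul_exp hx hγ, hcoeff, ofReal_natCast,
    exp_natCast_mul_sum_log_exp]
  congr 1
  rw [mul_sum, mul_sum]
  refine sum_congr rfl fun e _ => ?_
  push_cast
  linear_combination (I * m * φ e / 2) * hsign

theorem stmt19_general (n : ℕ) (θ θt : Fin n → ℝ) (ne : Fin n → ℤ) (Θ : ℝ)
    (ε : ℝ)
    (γp γm : ℤ)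
    (j : ℝ) (hj : ∃ m : ℕ, j = (m : ℝ) / 2)
    (xp xm : Fin 3 → ℝ) (hxp : ∑ i, xp i ^ 2 = 1) (hxm : ∑ i, xm i ^ 2 = 1)
    (hθ : ∑ e, θ e = ε * Θ)
    (hθt : ∑ e, θt e = Real.pi * ∑ e, (ne e : ℝ))
    (Gp Gm : Fin n → Matrix (Fin 2) (Fin 2) ℂ)
    (hGp : ∀ e, Gp e = (Real.cos ((θ e + θt e) / 2) : ℂ) • (1 : Matrix (Fin 2) (Fin 2) ℂ) +
      (Complex.I * (Real.sin ((θ e + θt e) / 2) : ℂ)) • su2vec xp)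
    (hGm : ∀ e, Gm e = (Real.cos ((θ e - θt e) / 2) : ℂ) • (1 : Matrix (Fin 2) (Fin 2) ℂ) +
      (Complex.I * (Real.sin ((θ e - θt e) / 2) : ℂ)) • su2vec xm)
    (S : ℂ)
    (hS : S = ((2 * |(γp : ℝ)| * j : ℝ) : ℂ) *
          ∑ e, Complex.log (Matrix.trace (((1 : ℝ) / 2 : ℂ) •
            ((1 : Matrix (Fin 2) (Fin 2) ℂ) + ((γp.sign : ℝ) : ℂ) • su2vec xp) * Gp e)) +
        ((2 * |(γm : ℝ)| * j : ℝ) : ℂ) *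
          ∑ e, Complex.log (Matrix.trace (((1 : ℝ) / 2 : ℂ) •
            ((1 : Matrix (Fin 2) (Fin 2) ℂ) + ((γm.sign : ℝ) : ℂ) • su2vec xm) * Gm e))) :
    Complex.exp S =
        Complex.exp (Complex.I * (ε : ℂ) * (((γp : ℝ) + (γm : ℝ) : ℝ) : ℂ) * (j : ℂ) * (Θ : ℂ) +
          Complex.I * (Real.pi : ℂ) * (((γp : ℝ) - (γm : ℝ) : ℝ) : ℂ) * (j : ℂ) *
            (∑ e, ((ne e : ℝ) : ℂ))) ∧
      Complex.exp S =
        Complex.exp (Complex.I * (ε : ℂ) * (((γp : ℝ) + (γm : ℝ) : ℝ) : ℂ) * (j : ℂ) * (Θ : ℂ)) *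
          ∏ e, Complex.exp (Complex.I * (Real.pi : ℂ) * ((ne e : ℝ) : ℂ) *
            (((γp : ℝ) - (γm : ℝ) : ℝ) : ℂ) * (j : ℂ)) := by
  obtain ⟨m, rfl⟩ := hj
  have hplus := exp_mul_sum_log_trace hxp γp m (fun e => θ e + θt e)
  have hminus := exp_mul_sum_log_trace hxm γm m (fun e => θ e - θt e)
  simp only [← hGp, ← hGm] at hplus hminus
  refine (fun hregge => ⟨hregge, hregge.trans ?_⟩) ?_
  · rw [hS, exp_add, hplus, hminus, ← exp_add]
    congr 1
    simp only [← ofReal_sum, sum_add_distrib, sum_sub_distrib, hθ, hθt]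
    push_cast
    ring
  · rw [exp_add, ← exp_sum, mul_sum]
    congr 2
    exact sum_congr rfl fun e _ => by ring

/-- Regge form of the on-shell wedge action: the exponentiated action equals
exp(iε(γ⁺+γ⁻)j Θ + iπ(γ⁺−γ⁻)j ∑ nₑ) = exp(iε(γ⁺+γ⁻)j Θ)·∏ₑ εₑ^{(γ⁺−γ⁻)j}. -/
theorem stmt19 (n : ℕ) (θ θt : Fin n → ℝ) (ne : Fin n → ℤ) (Θ : ℝ)
    (ε : ℝ) (hε : ε = 1 ∨ ε = -1)
    (γp γm : ℤ) (hγp : 0 < γp) (hγm : γm ≠ 0)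
    (j : ℝ) (hj : ∃ m : ℕ, j = (m : ℝ) / 2)
    (xp xm : Fin 3 → ℝ) (hxp : ∑ i, xp i ^ 2 = 1) (hxm : ∑ i, xm i ^ 2 = 1)
    (hθ : ∑ e, θ e = ε * Θ)
    (hθt : ∑ e, θt e = Real.pi * ∑ e, (ne e : ℝ))
    (Gp Gm : Fin n → Matrix (Fin 2) (Fin 2) ℂ)
    (hGp : ∀ e, Gp e = (Real.cos ((θ e + θt e) / 2) : ℂ) • (1 : Matrix (Fin 2) (Fin 2) ℂ) +
      (Complex.I * (Real.sin ((θ e + θt e) / 2) : ℂ)) • su2vec xp)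
    (hGm : ∀ e, Gm e = (Real.cos ((θ e - θt e) / 2) : ℂ) • (1 : Matrix (Fin 2) (Fin 2) ℂ) +
      (Complex.I * (Real.sin ((θ e - θt e) / 2) : ℂ)) • su2vec xm)
    (S : ℂ)
    (hS : S = ((2 * |(γp : ℝ)| * j : ℝ) : ℂ) *
          ∑ e, Complex.log (Matrix.trace (((1 : ℝ) / 2 : ℂ) •
            ((1 : Matrix (Fin 2) (Fin 2) ℂ) + ((γp.sign : ℝ) : ℂ) • su2vec xp) * Gp e)) +
        ((2 * |(γm : ℝ)| * j : ℝ) : ℂ) *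
          ∑ e, Complex.log (Matrix.trace (((1 : ℝ) / 2 : ℂ) •
            ((1 : Matrix (Fin 2) (Fin 2) ℂ) + ((γm.sign : ℝ) : ℂ) • su2vec xm) * Gm e))) :
    Complex.exp S =
        Complex.exp (Complex.I * (ε : ℂ) * (((γp : ℝ) + (γm : ℝ) : ℝ) : ℂ) * (j : ℂ) * (Θ : ℂ) +
          Complex.I * (Real.pi : ℂ) * (((γp : ℝ) - (γm : ℝ) : ℝ) : ℂ) * (j : ℂ) *
            (∑ e, ((ne e : ℝ) : ℂ))) ∧
      Complex.exp S =
        Complex.exp (Complex.I * (ε : ℂ) * (((γp : ℝ) + (γm : ℝ) : ℝ) : ℂ) * (j : ℂ) * (Θ : ℂ)) *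
          ∏ e, Complex.exp (Complex.I * (Real.pi : ℂ) * ((ne e : ℝ) : ℂ) *
            (((γp : ℝ) - (γm : ℝ) : ℝ) : ℂ) * (j : ℂ)) :=
  stmt19_general n θ θt ne Θ ε γp γm j hj xp xm hxp hxm hθ hθt Gp Gm hGp hGm S hS
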